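/- Let U, V ⊂ ℝⁿ be 0-symmetric convex bodies, H = (1/2)U, K = V + H. If X is a finite set with K ⊆ H + X, then the sharp doubling constant satisfies C_n(U, V) ≤ |X| · |U| / |V|. -/

import Mathlib

open MeasureTheory Complex Pointwise

noncomputable section

/-- A continuous-type positive definiteness condition for complex-valued
functions on `ℝⁿ`: all finite quadratic forms are real and nonnegative. -/
def IsPosDefC {n : ℕ} (f : (Fin n → ℝ) → ℂ) : Prop :=
  ∀ (X : Finset (Fin n → ℝ)) (c : (Fin n → ℝ) → ℂ),
    0 ≤ (∑ a ∈ X, ∑ b ∈ X, c a * (starRingEnd ℂ) (c b) * f (a - b)).re ∧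
    (∑ a ∈ X, ∑ b ∈ X, c a * (starRingEnd ℂ) (c b) * f (a - b)).im = 0

/-- Positive definiteness for real-valued functions on `ℝⁿ`. -/
def IsPosDefR {n : ℕ} (f : (Fin n → ℝ) → ℝ) : Prop :=
  IsPosDefC (fun x => (f x : ℂ))

/-- The set of ratios `(|V|⁻¹ ∫_V f) / (|U|⁻¹ ∫_U f)` over nonzero continuous
non-negative positive definite `f`. -/
def ratioSet (n : ℕ) (U V : Set (Fin n → ℝ)) : Set ℝ :=
  { c | ∃ f : (Fin n → ℝ) → ℝ, Continuous f ∧ (∀ x, 0 ≤ f x) ∧ IsPosDefR f ∧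
      f ≠ 0 ∧ 0 < ∫ x in U, f x ∧
      c = ((volume V).toReal⁻¹ * ∫ x in V, f x) /
          ((volume U).toReal⁻¹ * ∫ x in U, f x) }

/-- The sharp constant `C_n(U,V)` in the doubling-type condition at the origin. -/
def doublingConst (n : ℕ) (U V : Set (Fin n → ℝ)) : ℝ := sSup (ratioSet n U V)

/-- A `0`-symmetric convex body in `ℝⁿ`. -/
def IsSymConvexBody {n : ℕ} (U : Set (Fin n → ℝ)) : Prop :=
  Convex ℝ U ∧ IsCompact U ∧ (interior U).Nonempty ∧ U = -U

/-!
Fix a continuous, nonnegative, positive definite `f` and let `μ` be the uniform probability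
measure on `H`. Positive definiteness is a statement about finitely many points, but averaging
it over `N` independent samples of `μ` and letting `N → ∞` gives it for `μ` itself; applied to
the point pairs `{s, s + y}`, it shows that `D y = ∫∫ f (a - y - b) dμ(a) dμ(b)` is largest at
`y = 0`. Since `H - H ⊆ U`, `|H| D 0 ≤ ∫_U f`, while `a + V ⊆ V + H ⊆ H + X` for `a ∈ H` gives
`∫_V f ≤ |H| ∑_{x ∈ X} D x ≤ |X| |H| D 0`. Hence `∫_V f ≤ |X| ∫_U f`, which bounds each ratio.
-/

open ProbabilityTheory

theorem ProbabilityTheory.integral_cond {Ω : Type*} [MeasurableSpace Ω] (μ : Measure Ω)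
    (s : Set Ω) (g : Ω → ℝ) : ∫ x, g x ∂μ[|s] = (μ s).toReal⁻¹ * ∫ x in s, g x ∂μ := by
  rw [ProbabilityTheory.cond, integral_smul_measure, ENNReal.toReal_inv, smul_eq_mul]

namespace MeasureTheory

theorem MeasurePreserving.integral_comp_of_aestronglyMeasurable {α β : Type*}
    [MeasurableSpace α] [MeasurableSpace β] {μ : Measure α} {ν : Measure β} {φ : α → β}
    (hφ : MeasurePreserving φ μ ν) {g : β → ℝ} (hg : AEStronglyMeasurable g ν) :
    ∫ x, g (φ x) ∂μ = ∫ y, g y ∂ν := by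
  rw [← hφ.map_eq] at hg ⊢
  exact (integral_map hφ.measurable.aemeasurable hg).symm

theorem measurePreserving_eval_pair {ι α : Type*} [Fintype ι] [MeasurableSpace α]
    (ν : Measure α) [IsProbabilityMeasure ν] {i j : ι} (hij : i ≠ j) :
    MeasurePreserving (fun ω : ι → α => (ω i, ω j)) (Measure.pi fun _ => ν) (ν.prod ν) := by
  refine ⟨by fun_prop, ?_⟩
  have hind : IndepFun (fun ω : ι → α => ω i) (fun ω => ω j) (Measure.pi fun _ => ν) :=
    (iIndepFun_pi (X := fun _ => id) fun _ => aemeasurable_id).indepFun hij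
  rw [hind.map_prod_eq_prod_map_map (measurable_pi_apply i).aemeasurable
    (measurable_pi_apply j).aemeasurable, (measurePreserving_eval (fun _ => ν) i).map_eq,
    (measurePreserving_eval (fun _ => ν) j).map_eq]

theorem integral_sum_sum_pi {α : Type*} [MeasurableSpace α] (ν : Measure α)
    [IsProbabilityMeasure ν] (N : ℕ) {Q : α → α → ℝ} (hdiag : Integrable (fun s => Q s s) ν)
    (hQ : Integrable (fun q : α × α => Q q.1 q.2) (ν.prod ν)) :
    ∫ ω, ∑ i, ∑ j, Q (ω i) (ω j) ∂Measure.pi (fun _ : Fin N => ν) =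
      N * ∫ s, Q s s ∂ν + ((N : ℝ) ^ 2 - N) * ∫ q, Q q.1 q.2 ∂ν.prod ν := by
  set P := Measure.pi fun _ : Fin N => ν
  set A := ∫ s, Q s s ∂ν
  set B := ∫ q, Q q.1 q.2 ∂ν.prod ν
  have hmarg : ∀ i j, Integrable (fun ω => Q (ω i) (ω j)) P ∧
      ∫ ω, Q (ω i) (ω j) ∂P = if i = j then A else B := by
    intro i j
    rcases eq_or_ne i j with rfl | hij
    · have he := measurePreserving_eval (fun _ : Fin N => ν) i
      exact ⟨he.integrable_comp_of_integrable hdiag,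
        (he.integral_comp_of_aestronglyMeasurable hdiag.1).trans (if_pos rfl).symm⟩
    · have he := measurePreserving_eval_pair ν hij
      exact ⟨he.integrable_comp_of_integrable hQ,
        (he.integral_comp_of_aestronglyMeasurable hQ.1).trans (if_neg hij).symm⟩
  have hsplit : ∀ i j : Fin N, (if i = j then A else B) = B + if i = j then A - B else 0 :=
    fun i j => by split_ifs <;> ring
  rw [integral_finsetSum _ fun i _ => integrable_finsetSum _ fun j _ => (hmarg i j).1]
  simp only [integral_finsetSum _ fun j _ => (hmarg _ j).1, (hmarg _ _).2, hsplit,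
    Finset.sum_add_distrib, Finset.sum_ite_eq, Finset.mem_univ, if_true, Finset.sum_const,
    Finset.card_univ, Fintype.card_fin, nsmul_eq_mul]
  ring

theorem setIntegral_biUnion_le_sum {α ι : Type*} [MeasurableSpace α]
    {μ : Measure α} {g : α → ℝ} (hg : ∀ a, 0 ≤ g a) (X : Finset ι) {S : ι → Set α}
    (hint : ∀ i ∈ X, IntegrableOn g (S i) μ) :
    ∫ a in ⋃ i ∈ X, S i, g a ∂μ ≤ ∑ i ∈ X, ∫ a in S i, g a ∂μ := by
  have hle : μ.restrict (⋃ i ∈ X, S i) ≤ ∑ i ∈ X, μ.restrict (S i) :=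
    Measure.le_iff.2 fun t ht => by
      simpa only [Measure.restrict_apply ht, Set.inter_iUnion₂, Measure.coe_finsetSum,
        Finset.sum_apply] using measure_biUnion_finset_le X fun i => t ∩ S i
  calc ∫ a in ⋃ i ∈ X, S i, g a ∂μ ≤ ∫ a, g a ∂∑ i ∈ X, μ.restrict (S i) :=
        integral_mono_measure hle (ae_of_all _ hg) (integrable_finsetSum_measure.2 hint)
    _ = ∑ i ∈ X, ∫ a in S i, g a ∂μ := integral_finsetSum_measure hint

section Translation

variable {G : Type*} [AddCommGroup G] [TopologicalSpace G] [IsTopologicalAddGroup G]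
  [MeasurableSpace G] [BorelSpace G] {μ : Measure G} [μ.IsAddLeftInvariant] {g : G → ℝ}

theorem setIntegral_comp_sub_le [μ.IsNegInvariant] {U H : Set G} (hg : ∀ x, 0 ≤ g x)
    (hU : IntegrableOn g U μ) {a : G} (hHU : ∀ b ∈ H, a - b ∈ U) :
    ∫ b in H, g (a - b) ∂μ ≤ ∫ z in U, g z ∂μ := by
  rw [← (Measure.measurePreserving_sub_left μ a).setIntegral_image_emb
    (MeasurableEquiv.subLeft a).measurableEmbedding]
  exact setIntegral_mono_set hU (ae_of_all _ fun z => hg z)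
    (Set.image_subset_iff.2 hHU).eventuallyLE

theorem setIntegral_le_sum_setIntegral_comp_sub [T2Space G] [IsFiniteMeasureOnCompacts μ]
    (hgc : Continuous g) (hg : ∀ x, 0 ≤ g x) (heven : ∀ x, g (-x) = g x) {V H : Set G}
    (hH : IsCompact H) (X : Finset G) (hcov : V + H ⊆ H + X) {a : G} (ha : a ∈ H) :
    ∫ z in V, g z ∂μ ≤ ∑ x ∈ X, ∫ b in H, g (a - x - b) ∂μ := by
  have hga : Continuous fun c => g (a - c) := by fun_prop
  have htrans : ∀ x, ∫ b in H, g (a - x - b) ∂μ = ∫ c in (x + ·) '' H, g (a - c) ∂μ :=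
    fun x => by
      rw [(measurePreserving_add_left μ x).setIntegral_image_emb
        (MeasurableEquiv.addLeft x).measurableEmbedding]
      simp only [sub_sub]
  have hsub : (· + a) '' V ⊆ ⋃ x ∈ X, (x + ·) '' H := by
    rintro _ ⟨v, hv, rfl⟩
    obtain ⟨b, hb, x, hx, hbx⟩ := hcov (Set.add_mem_add hv ha)
    exact Set.mem_biUnion hx ⟨b, hb, (add_comm x b).trans hbx⟩
  calc ∫ z in V, g z ∂μ = ∫ c in (· + a) '' V, g (a - c) ∂μ := by
        rw [(measurePreserving_add_right μ a).setIntegral_image_emb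
          (MeasurableEquiv.addRight a).measurableEmbedding]
        simp only [sub_add_cancel_right, heven]
    _ ≤ ∫ c in ⋃ x ∈ X, (x + ·) '' H, g (a - c) ∂μ :=
        setIntegral_mono_set (hga.continuousOn.integrableOn_compact
          (X.isCompact_biUnion fun x _ => hH.image (continuous_const_add x)))
          (ae_of_all _ fun c => hg _) hsub.eventuallyLE
    _ ≤ ∑ x ∈ X, ∫ b in H, g (a - x - b) ∂μ := by
        simp only [htrans]
        exact setIntegral_biUnion_le_sum (fun c => hg _) X fun x _ =>
          hga.continuousOn.integrableOn_compact (hH.image (continuous_const_add x))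

end Translation

end MeasureTheory

theorem nonneg_of_forall_nat_mul_add_sq_sub_mul_nonneg {A B : ℝ}
    (h : ∀ N : ℕ, 0 ≤ N * A + ((N : ℝ) ^ 2 - N) * B) : 0 ≤ B := by
  by_contra! hB
  have hA : 0 ≤ A := by simpa using h 1
  obtain ⟨N, hN⟩ := exists_nat_gt (A / -B + 1)
  have hAB : A < (N - 1) * -B := by
    rw [← div_lt_iff₀ (neg_pos.2 hB)]
    linarith
  have hN0 : (0 : ℝ) < N := by linarith [div_nonneg hA (neg_pos.2 hB).le]
  nlinarith [h N, mul_pos hN0 (by linarith : 0 < (N - 1) * -B - A)]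

theorem Convex.inv_two_smul_sub_inv_two_smul {E : Type*} [AddCommGroup E] [Module ℝ E]
    {U : Set E} (hU : Convex ℝ U) (hsymm : U = -U) : (2 : ℝ)⁻¹ • U - (2 : ℝ)⁻¹ • U = U := by
  rw [sub_eq_add_neg, ← Set.smul_set_neg, ← hsymm, ← hU.add_smul (by norm_num) (by norm_num)]
  norm_num

namespace IsPosDefR

variable {n : ℕ} {f : (Fin n → ℝ) → ℝ}

theorem apply_neg (hf : IsPosDefR f) (x : Fin n → ℝ) : f (-x) = f x := by
  classical
  rcases eq_or_ne x 0 with rfl | hx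
  · rw [neg_zero]
  have h := (hf {0, x} fun z => if z = 0 then 1 else I).2
  simp only [Finset.sum_pair hx.symm, if_neg hx, zero_sub, sub_zero, sub_self,
    conj_I, add_im, mul_im, ofReal_re, ofReal_im] at h
  norm_num at h
  linarith

theorem sum_sum_nonneg (hf : IsPosDefR f) {ι : Type*} [Fintype ι] (p : ι → Fin n → ℝ)
    (c : ι → ℝ) : 0 ≤ ∑ k, ∑ l, c k * c l * f (p k - p l) := by
  classical
  -- Points of the family that coincide are merged by adding up their coefficients.
  set C : (Fin n → ℝ) → ℝ := fun a => ∑ k with p k = a, c k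
  have merge : ∀ g : (Fin n → ℝ) → ℝ,
      ∑ a ∈ Finset.univ.image p, C a * g a = ∑ k, c k * g (p k) := fun g => by
    rw [← Finset.sum_fiberwise_of_maps_to (g := p)
      fun k _ => Finset.mem_image_of_mem p (Finset.mem_univ k)]
    refine Finset.sum_congr rfl fun a _ => ?_
    rw [Finset.sum_mul]
    exact Finset.sum_congr rfl fun k hk => by rw [(Finset.mem_filter.1 hk).2]
  have h := (hf (Finset.univ.image p) fun a => (C a : ℂ)).1
  simp only [conj_ofReal, ← ofReal_mul, ← ofReal_sum, ofReal_re] at h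
  simpa only [merge, Finset.mul_sum, mul_assoc, ← Finset.mul_sum] using h

theorem abs_le_apply_zero (hf : IsPosDefR f) (x : Fin n → ℝ) : |f x| ≤ f 0 := by
  have h := fun s : ℝ => hf.sum_sum_nonneg ![0, x] ![1, s]
  simp only [Fin.sum_univ_two, Matrix.cons_val_zero, Matrix.cons_val_one, sub_self, zero_sub,
    sub_zero, hf.apply_neg] at h
  rw [abs_le]
  constructor <;> linarith [h 1, h (-1)]

theorem integrable_comp (hf : IsPosDefR f) (hm : Measurable f) {α : Type*} [MeasurableSpace α]
    {P : Measure α} [IsFiniteMeasure P] {T : α → Fin n → ℝ} (hT : Measurable T) :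
    Integrable (fun ω => f (T ω)) P :=
  .of_bound (hm.comp hT).aestronglyMeasurable (f 0) (ae_of_all _ fun _ => hf.abs_le_apply_zero _)

theorem integral_sum_sum_nonneg (hf : IsPosDefR f) (hm : Measurable f) {α : Type*}
    [MeasurableSpace α] (ν : Measure α) [IsProbabilityMeasure ν] {ι : Type*} [Fintype ι]
    {p : α → ι → Fin n → ℝ} (hp : Measurable p) (c : ι → ℝ) :
    0 ≤ ∫ q, ∑ k, ∑ l, c k * c l * f (p q.1 k - p q.2 l) ∂ν.prod ν := by
  set Q : α → α → ℝ := fun s t => ∑ k, ∑ l, c k * c l * f (p s k - p t l)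
  have hdiag : Integrable (fun s => Q s s) ν :=
    integrable_finsetSum _ fun k _ => integrable_finsetSum _ fun l _ =>
      (hf.integrable_comp hm (by fun_prop)).const_mul _
  have hoff : Integrable (fun q : α × α => Q q.1 q.2) (ν.prod ν) :=
    integrable_finsetSum _ fun k _ => integrable_finsetSum _ fun l _ =>
      (hf.integrable_comp hm (by fun_prop)).const_mul _
  -- The quadratic form of `N` independent samples is nonnegative, and its mean consists of `N`
  -- diagonal terms and `N ^ 2 - N` copies of the integral in the goal.
  refine nonneg_of_forall_nat_mul_add_sq_sub_mul_nonneg (A := ∫ s, Q s s ∂ν) fun N => ?_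
  rw [← integral_sum_sum_pi ν N hdiag hoff]
  refine integral_nonneg fun ω => ?_
  have h := hf.sum_sum_nonneg (fun x : Fin N × ι => p (ω x.1) x.2) fun x => c x.2
  simp only [Fintype.sum_prod_type] at h
  exact h.trans_eq (Finset.sum_congr rfl fun i _ => Finset.sum_comm)

theorem integral_sub_sub_le (hf : IsPosDefR f) (hm : Measurable f) (μ : Measure (Fin n → ℝ))
    [IsProbabilityMeasure μ] (y : Fin n → ℝ) :
    ∫ q, f (q.1 - y - q.2) ∂μ.prod μ ≤ ∫ q, f (q.1 - q.2) ∂μ.prod μ := by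
  -- Each sample `s` contributes the point `s` with weight `1` and `s + y` with weight `-1`.
  have h := hf.integral_sum_sum_nonneg hm μ (p := fun s => ![s, s + y]) (by fun_prop) ![1, -1]
  have hQ : ∀ q : (Fin n → ℝ) × (Fin n → ℝ), ∑ k, ∑ l, ![(1 : ℝ), -1] k * ![(1 : ℝ), -1] l *
      f (![q.1, q.1 + y] k - ![q.2, q.2 + y] l) =
      2 * f (q.1 - q.2) - f (q.1 - y - q.2) - f (q.1 + y - q.2) := fun q => by
    simp only [Fin.sum_univ_two, Matrix.cons_val_zero, Matrix.cons_val_one]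
    rw [show q.1 - (q.2 + y) = q.1 - y - q.2 by abel, show q.1 + y - (q.2 + y) = q.1 - q.2 by abel]
    ring
  have hswap : ∫ q, f (q.1 + y - q.2) ∂μ.prod μ = ∫ q, f (q.1 - y - q.2) ∂μ.prod μ := by
    rw [← integral_prod_swap]
    refine integral_congr_ae (ae_of_all _ fun q => ?_)
    simp only [Prod.fst_swap, Prod.snd_swap]
    rw [← hf.apply_neg (q.1 - y - q.2)]
    congr 1
    abel
  have hint : ∀ {T : (Fin n → ℝ) × (Fin n → ℝ) → Fin n → ℝ}, Measurable T →
      Integrable (fun q => f (T q)) (μ.prod μ) := hf.integrable_comp hm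
  simp only [hQ] at h
  rw [integral_sub (f := fun q => 2 * f (q.1 - q.2) - f (q.1 - y - q.2))
    ((hint (by fun_prop)).const_mul 2 |>.sub (hint (by fun_prop))) (hint (by fun_prop)),
    integral_sub ((hint (by fun_prop)).const_mul 2) (hint (by fun_prop)),
    integral_const_mul, hswap] at h
  linarith

theorem integral_sub_le_setIntegral (hf : IsPosDefR f) (hc : Continuous f) (hnn : ∀ x, 0 ≤ f x)
    {U H : Set (Fin n → ℝ)} (hH : IsCompact H) (hH0 : volume H ≠ 0) (hHU : H - H ⊆ U)
    (hU : IntegrableOn f U) :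
    ∫ q, f (q.1 - q.2) ∂(volume[|H]).prod volume[|H] ≤ (volume H).toReal⁻¹ * ∫ z in U, f z := by
  have : IsProbabilityMeasure volume[|H] :=
    cond_isProbabilityMeasure_of_finite hH0 hH.measure_lt_top.ne
  have hint : Integrable (fun q : (Fin n → ℝ) × (Fin n → ℝ) => f (q.1 - q.2))
      ((volume[|H]).prod volume[|H]) := hf.integrable_comp hc.measurable (by fun_prop)
  rw [integral_prod _ hint]
  refine (integral_mono_ae hint.integral_prod_left
    (integrable_const ((volume H).toReal⁻¹ * ∫ z in U, f z)) ?_).trans_eq (by simp)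
  refine ae_cond_of_forall_mem hH.measurableSet fun a ha => ?_
  dsimp only
  rw [integral_cond]
  gcongr
  exact setIntegral_comp_sub_le hnn hU fun b hb => hHU (Set.sub_mem_sub ha hb)

theorem inv_mul_setIntegral_le_sum_integral (hf : IsPosDefR f) (hc : Continuous f)
    (hnn : ∀ x, 0 ≤ f x) {V H : Set (Fin n → ℝ)} (hH : IsCompact H) (hH0 : volume H ≠ 0)
    (X : Finset (Fin n → ℝ)) (hcov : V + H ⊆ H + X) :
    (volume H).toReal⁻¹ * ∫ z in V, f z ≤
      ∑ x ∈ X, ∫ q, f (q.1 - x - q.2) ∂(volume[|H]).prod volume[|H] := by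
  have : IsProbabilityMeasure volume[|H] :=
    cond_isProbabilityMeasure_of_finite hH0 hH.measure_lt_top.ne
  have hint : ∀ x, Integrable (fun q : (Fin n → ℝ) × (Fin n → ℝ) => f (q.1 - x - q.2))
      ((volume[|H]).prod volume[|H]) := fun x => hf.integrable_comp hc.measurable (by fun_prop)
  simp only [integral_prod _ (hint _)]
  rw [← integral_finsetSum _ fun x _ => (hint x).integral_prod_left]
  refine le_of_eq_of_le (by simp) (integral_mono_ae
    (integrable_const ((volume H).toReal⁻¹ * ∫ z in V, f z))
    (integrable_finsetSum _ fun x _ => (hint x).integral_prod_left) ?_)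
  refine ae_cond_of_forall_mem hH.measurableSet fun a ha => ?_
  dsimp only
  simp only [integral_cond, ← Finset.mul_sum]
  gcongr
  exact setIntegral_le_sum_setIntegral_comp_sub hc hnn hf.apply_neg hH X hcov ha

theorem setIntegral_le_card_mul_setIntegral (hf : IsPosDefR f) (hc : Continuous f)
    (hnn : ∀ x, 0 ≤ f x) {U V H : Set (Fin n → ℝ)} (hH : IsCompact H) (hH0 : volume H ≠ 0)
    (hHU : H - H ⊆ U) (hU : IntegrableOn f U) (X : Finset (Fin n → ℝ))
    (hcov : V + H ⊆ H + X) :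
    ∫ z in V, f z ≤ X.card * ∫ z in U, f z := by
  have : IsProbabilityMeasure volume[|H] :=
    cond_isProbabilityMeasure_of_finite hH0 hH.measure_lt_top.ne
  have hm : 0 < (volume H).toReal := ENNReal.toReal_pos hH0 hH.measure_lt_top.ne
  have hmax : ∑ x ∈ X, ∫ q, f (q.1 - x - q.2) ∂(volume[|H]).prod volume[|H] ≤
      X.card * ∫ q, f (q.1 - q.2) ∂(volume[|H]).prod volume[|H] := by
    simpa only [nsmul_eq_mul] using Finset.sum_le_card_nsmul X _ _ fun y _ =>
      hf.integral_sub_sub_le hc.measurable volume[|H] y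
  have h := (hf.inv_mul_setIntegral_le_sum_integral hc hnn hH hH0 X hcov).trans <|
    hmax.trans <| mul_le_mul_of_nonneg_left
      (hf.integral_sub_le_setIntegral hc hnn hH hH0 hHU hU) X.card.cast_nonneg
  rwa [mul_left_comm, mul_le_mul_iff_right₀ (inv_pos.2 hm)] at h

end IsPosDefR

theorem doublingConst_covering_bound_general {n : ℕ} (U V : Set (Fin n → ℝ))
    (hU : IsSymConvexBody U)
    (X : Finset (Fin n → ℝ))
    (hcov : V + (2 : ℝ)⁻¹ • U ⊆ (2 : ℝ)⁻¹ • U + (X : Set (Fin n → ℝ))) :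
    doublingConst n U V ≤ (X.card : ℝ) * (volume U).toReal / (volume V).toReal := by
  obtain ⟨hconv, hcpt, hinterior, hsymm⟩ := hU
  have hH0 : volume ((2 : ℝ)⁻¹ • U) ≠ 0 := by
    refine (Measure.measure_pos_of_nonempty_interior _ ?_).ne'
    rw [interior_smul₀ (by norm_num)]
    exact hinterior.smul_set
  have hu : 0 < (volume U).toReal :=
    ENNReal.toReal_pos (Measure.measure_pos_of_nonempty_interior _ hinterior).ne'
      hcpt.measure_lt_top.ne
  refine Real.sSup_le ?_ (div_nonneg (mul_nonneg X.card.cast_nonneg hu.le) ENNReal.toReal_nonneg)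
  rintro _ ⟨f, hf, hnn, hpd, -, hfU, rfl⟩
  have key := hpd.setIntegral_le_card_mul_setIntegral hf hnn (hcpt.smul _) hH0
    (hconv.inv_two_smul_sub_inv_two_smul hsymm).subset (hf.continuousOn.integrableOn_compact hcpt)
    X hcov
  rcases (ENNReal.toReal_nonneg (a := volume V)).eq_or_lt with hv | hv
  · rw [← hv]
    simp
  rw [div_le_div_iff₀ (by positivity) hv]
  field_simp
  linarith

/-- If `K = V + H ⊆ H + X` with `H = (1/2)U`, then
`C_n(U,V) ≤ |X| |U| / |V|`. -/
theorem doublingConst_covering_bound {n : ℕ} (U V : Set (Fin n → ℝ))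
    (hU : IsSymConvexBody U) (hV : IsSymConvexBody V)
    (X : Finset (Fin n → ℝ))
    (hcov : V + (2 : ℝ)⁻¹ • U ⊆ (2 : ℝ)⁻¹ • U + (X : Set (Fin n → ℝ))) :
    doublingConst n U V ≤ (X.card : ℝ) * (volume U).toReal / (volume V).toReal :=
  doublingConst_covering_bound_general U V hU X hcov
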